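/- Let β̂ minimize β ↦ ‖Y − Xβ‖_n + λΩ(β) over ℝ^p with ‖ε‖_n > 0 and ‖ε̂‖_n ≠ 0, where ε̂ := Y − Xβ̂. Then the prediction error satisfies ‖X(β̂ − β⁰)‖_n ≤ ‖ε‖_n · √( λ⁰/λ + 2(λ⁰/λ)f + (‖ε̂‖_n/‖ε‖_n)·f ). -/

import Mathlib

/-! Write `ε̂ = Y - Xβ̂` and `v = X(β̂ - β⁰) = ε - ε̂`, so that `‖v‖_n² = εᵀv/n - ε̂ᵀv/n`.
The first term is at most `λ⁰ ‖ε‖_n Ω(β̂ - β⁰)` by the dual-norm inequality. Comparing the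
objective at `β̂` with its values on the segment towards `β⁰` and letting the step tend to `0`
gives the first-order condition `ε̂ᵀv/n ≥ λ ‖ε̂‖_n (Ω(β̂) - Ω(β⁰))`. The basic inequality
`‖ε̂‖_n + λΩ(β̂) ≤ ‖ε‖_n + λΩ(β⁰)` then eliminates `Ω(β̂)`. -/

open scoped BigOperators

/-- The normalized norm `‖a‖_n = sqrt( (∑ a_j^2) / n )`. -/
noncomputable def normN {n : ℕ} (a : Fin n → ℝ) : ℝ :=
  Real.sqrt ((∑ j, a j ^ 2) / n)

/-- `Ω` is a norm on `ℝ^p`. -/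
def IsNorm {p : ℕ} (Ω : (Fin p → ℝ) → ℝ) : Prop :=
  (∀ x y, Ω (x + y) ≤ Ω x + Ω y) ∧
  (∀ (c : ℝ) (x), Ω (c • x) = |c| * Ω x) ∧
  (∀ x, Ω x = 0 → x = 0)

/-- The dual norm `Ω*(x) = max_{Ω(z) ≤ 1} zᵀx`. -/
noncomputable def dualNorm {p : ℕ} (Ω : (Fin p → ℝ) → ℝ) (x : Fin p → ℝ) : ℝ :=
  sSup {r | ∃ z, Ω z ≤ 1 ∧ r = ∑ i, z i * x i}

/-- `β_S` : the restriction of `β` to `S`, extended by zero off `S`. -/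
def restrict {p : ℕ} (S : Finset (Fin p)) (β : Fin p → ℝ) : Fin p → ℝ :=
  fun i => if i ∈ S then β i else 0

/-- `Ω'` is a norm on the coordinates in `Sᶜ` (definiteness is required only for
vectors vanishing on `S`). -/
def IsNormOn {p : ℕ} (S : Finset (Fin p)) (Ω' : (Fin p → ℝ) → ℝ) : Prop :=
  (∀ x y, Ω' (x + y) ≤ Ω' x + Ω' y) ∧
  (∀ (c : ℝ) (x), Ω' (c • x) = |c| * Ω' x) ∧
  (∀ x, (∀ i ∈ S, x i = 0) → Ω' x = 0 → x = 0)

/-- `Ω` is weakly decomposable for the (allowed) set `S`, with associated norm `Ωc`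
on the coordinates in `Sᶜ`. -/
def WeaklyDecomposable {p : ℕ} (Ω : (Fin p → ℝ) → ℝ) (S : Finset (Fin p))
    (Ωc : (Fin p → ℝ) → ℝ) : Prop :=
  IsNorm Ω ∧ IsNormOn S Ωc ∧
  ∀ β : Fin p → ℝ, Ω (restrict S β) + Ωc (restrict Sᶜ β) ≤ Ω β

/-- The `Ω`-eigenvalue `δ_Ω(L,S)`. -/
noncomputable def omegaEigen {n p : ℕ} (X : Matrix (Fin n) (Fin p) ℝ)
    (Ω Ωc : (Fin p → ℝ) → ℝ) (S : Finset (Fin p)) (L : ℝ) : ℝ :=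
  sInf {r | ∃ β : Fin p → ℝ, Ω (restrict S β) = 1 ∧ Ωc (restrict Sᶜ β) ≤ L ∧
    r = normN (X.mulVec (restrict S β) - X.mulVec (restrict Sᶜ β))}

/-- The `Ω`-effective sparsity `Γ_Ω²(L,S) = 1/δ_Ω²(L,S)`. -/
noncomputable def effSparsity {n p : ℕ} (X : Matrix (Fin n) (Fin p) ℝ)
    (Ω Ωc : (Fin p → ℝ) → ℝ) (S : Finset (Fin p)) (L : ℝ) : ℝ :=
  1 / (omegaEigen X Ω Ωc S L) ^ 2

open Set Filter Topology Matrix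
open scoped RealInnerProductSpace

namespace IsNorm

variable {p : ℕ} {Ω : (Fin p → ℝ) → ℝ}

def toSeminorm (hΩ : IsNorm Ω) : Seminorm ℝ (Fin p → ℝ) :=
  Seminorm.of Ω hΩ.1 fun c x => by rw [hΩ.2.1, Real.norm_eq_abs]

@[simp]
lemma coe_toSeminorm (hΩ : IsNorm Ω) : ⇑hΩ.toSeminorm = Ω := rfl

lemma map_zero (hΩ : IsNorm Ω) : Ω 0 = 0 := by
  simpa using _root_.map_zero hΩ.toSeminorm

lemma nonneg (hΩ : IsNorm Ω) (x : Fin p → ℝ) : 0 ≤ Ω x := by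
  simpa using apply_nonneg hΩ.toSeminorm x

lemma map_sub_le_add (hΩ : IsNorm Ω) (x y : Fin p → ℝ) : Ω (x - y) ≤ Ω x + Ω y := by
  simpa using _root_.map_sub_le_add hΩ.toSeminorm x y

lemma convexOn (hΩ : IsNorm Ω) : ConvexOn ℝ univ Ω := by
  simpa using hΩ.toSeminorm.convexOn

lemma continuous (hΩ : IsNorm Ω) : Continuous Ω :=
  hΩ.convexOn.locallyLipschitz.continuous

lemma exists_pos_mul_norm_le (hΩ : IsNorm Ω) : ∃ m > 0, ∀ z, m * ‖z‖ ≤ Ω z := by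
  have hpos : ∀ z ∈ Metric.sphere (0 : Fin p → ℝ) 1, 0 < Ω z := fun z hz =>
    (hΩ.nonneg z).lt_of_ne fun h => by simp [hΩ.2.2 z h.symm] at hz
  obtain ⟨m, hm, hmle⟩ :=
    (isCompact_sphere 0 1).exists_forall_le' hΩ.continuous.continuousOn hpos
  refine ⟨m, hm, fun z => ?_⟩
  rcases eq_or_ne z 0 with rfl | hz
  · simp [hΩ.map_zero]
  have hz' : 0 < ‖z‖ := norm_pos_iff.mpr hz
  have hunit := hmle (‖z‖⁻¹ • z) (by simp [norm_smul, hz'.ne'])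
  rwa [hΩ.2.1, abs_of_pos (inv_pos.mpr hz'), inv_mul_eq_div, le_div_iff₀ hz'] at hunit

lemma isCompact_unitBall (hΩ : IsNorm Ω) : IsCompact {z | Ω z ≤ 1} := by
  obtain ⟨m, hm, hmle⟩ := hΩ.exists_pos_mul_norm_le
  refine Metric.isCompact_of_isClosed_isBounded (isClosed_le hΩ.continuous continuous_const)
    ((Metric.isBounded_closedBall (x := 0) (r := 1 / m)).subset fun z hz => ?_)
  rw [mem_closedBall_zero_iff, le_div_iff₀ hm, mul_comm]
  exact (hmle z).trans hz

lemma bddAbove_dualNorm_set (hΩ : IsNorm Ω) (x : Fin p → ℝ) :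
    BddAbove {r | ∃ z, Ω z ≤ 1 ∧ r = ∑ i, z i * x i} := by
  have hset : {r | ∃ z, Ω z ≤ 1 ∧ r = ∑ i, z i * x i} = (· ⬝ᵥ x) '' {z | Ω z ≤ 1} := by
    ext r
    exact exists_congr fun z => and_congr_right fun _ => eq_comm
  rw [hset]
  exact hΩ.isCompact_unitBall.bddAbove_image (by fun_prop)

lemma dotProduct_le_dualNorm_mul (hΩ : IsNorm Ω) (x u : Fin p → ℝ) :
    u ⬝ᵥ x ≤ dualNorm Ω x * Ω u := by
  rcases (hΩ.nonneg u).eq_or_lt with h0 | hpos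
  · simp [hΩ.2.2 u h0.symm, hΩ.map_zero]
  have hunit : Ω ((Ω u)⁻¹ • u) ≤ 1 := by
    rw [hΩ.2.1, abs_of_pos (inv_pos.mpr hpos), inv_mul_cancel₀ hpos.ne']
  have hle : (Ω u)⁻¹ * (u ⬝ᵥ x) ≤ dualNorm Ω x :=
    le_csSup (hΩ.bddAbove_dualNorm_set x)
      ⟨_, hunit, by simp [dotProduct, Finset.mul_sum, mul_assoc]⟩
  rwa [inv_mul_le_iff₀ hpos, mul_comm] at hle

lemma dualNorm_nonneg (hΩ : IsNorm Ω) (x : Fin p → ℝ) : 0 ≤ dualNorm Ω x :=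
  Real.sSup_nonneg' ⟨0, ⟨0, by simp [hΩ.map_zero]⟩, le_rfl⟩

end IsNorm

noncomputable def toScaledEuclidean (n : ℕ) : (Fin n → ℝ) →ₗ[ℝ] EuclideanSpace ℝ (Fin n) :=
  (√n)⁻¹ • (WithLp.linearEquiv 2 ℝ (Fin n → ℝ)).symm.toLinearMap

lemma normN_eq_norm_toScaledEuclidean {n : ℕ} (a : Fin n → ℝ) :
    normN a = ‖toScaledEuclidean n a‖ := by
  simp [toScaledEuclidean, normN, norm_smul, EuclideanSpace.norm_eq, div_eq_inv_mul,
    abs_of_nonneg (Real.sqrt_nonneg (n : ℝ))]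

lemma inner_toScaledEuclidean {n : ℕ} (a b : Fin n → ℝ) :
    ⟪toScaledEuclidean n a, toScaledEuclidean n b⟫ = a ⬝ᵥ b / n := by
  simp only [toScaledEuclidean, LinearMap.smul_apply, real_inner_smul_left, real_inner_smul_right]
  rw [← mul_assoc, ← mul_inv, Real.mul_self_sqrt n.cast_nonneg, div_eq_inv_mul]
  exact congrArg _ (dotProduct_comm b a)

lemma mul_norm_le_inner_of_forall_le_norm_add_smul {F : Type*} [NormedAddCommGroup F]
    [InnerProductSpace ℝ F] {a v : F} {c : ℝ}
    (h : ∀ t ∈ Ioc (0 : ℝ) 1, ‖a‖ + t * c ≤ ‖a + t • v‖) :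
    c * ‖a‖ ≤ ⟪a, v⟫ := by
  have key : ∀ t ∈ Ioc (0 : ℝ) 1, c * ‖a‖ ≤ ⟪a, v⟫ + t * (‖v‖ ^ 2 / 2) := by
    intro t ht
    -- AM-GM `2 ‖a‖ ‖a + t v‖ ≤ ‖a‖² + ‖a + t v‖²` makes the hypothesis linear in `⟪a, v⟫`
    have hamgm := two_mul_le_add_sq ‖a‖ ‖a + t • v‖
    have hexp := norm_add_sq_real a (t • v)
    rw [inner_smul_right, norm_smul, Real.norm_eq_abs, abs_of_pos ht.1] at hexp
    have := h t ht
    nlinarith [ht.1, norm_nonneg a]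
  have hlim : Tendsto (fun t : ℝ => ⟪a, v⟫ + t * (‖v‖ ^ 2 / 2)) (𝓝[>] 0) (𝓝 ⟪a, v⟫) := by
    refine tendsto_nhdsWithin_of_tendsto_nhds ?_
    exact (continuous_const.add (continuous_id.mul continuous_const)).tendsto' _ _ (by simp)
  exact ge_of_tendsto hlim (eventually_of_mem (Ioc_mem_nhdsGT one_pos) key)

lemma normN_sq {n : ℕ} (a : Fin n → ℝ) : normN a ^ 2 = a ⬝ᵥ a / n := by
  rw [normN_eq_norm_toScaledEuclidean, ← real_inner_self_eq_norm_sq, inner_toScaledEuclidean]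

lemma dotProduct_mulVec_div_le_dualNorm_mul {n p : ℕ} {Ω : (Fin p → ℝ) → ℝ} (hΩ : IsNorm Ω)
    {ε : Fin n → ℝ} (hε : normN ε ≠ 0) (X : Matrix (Fin n) (Fin p) ℝ) (w : Fin p → ℝ) :
    ε ⬝ᵥ X *ᵥ w / n ≤ dualNorm Ω (vecMul ε X) / (n * normN ε) * normN ε * Ω w := by
  rw [div_mul_eq_mul_div, mul_div_mul_right _ _ hε, dotProduct_mulVec, dotProduct_comm,
    div_mul_eq_mul_div]
  gcongr
  exact hΩ.dotProduct_le_dualNorm_mul _ _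

section SqrtLasso

variable {n p : ℕ} (Y : Fin n → ℝ) (X : Matrix (Fin n) (Fin p) ℝ) {Ω : (Fin p → ℝ) → ℝ}
  {lam : ℝ} {bh : Fin p → ℝ}

lemma sqrtLasso_first_order (hΩ : IsNorm Ω) (hlam : 0 ≤ lam)
    (hmin : ∀ β : Fin p → ℝ,
      normN (Y - X *ᵥ bh) + lam * Ω bh ≤ normN (Y - X *ᵥ β) + lam * Ω β)
    (β : Fin p → ℝ) :
    lam * (Ω bh - Ω β) * normN (Y - X *ᵥ bh) ≤ (Y - X *ᵥ bh) ⬝ᵥ X *ᵥ (bh - β) / n := by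
  rw [normN_eq_norm_toScaledEuclidean, ← inner_toScaledEuclidean]
  refine mul_norm_le_inner_of_forall_le_norm_add_smul fun t ht => ?_
  have hres : Y - X *ᵥ ((1 - t) • bh + t • β) = (Y - X *ᵥ bh) + t • X *ᵥ (bh - β) := by
    simp only [mulVec_add, mulVec_smul, mulVec_sub]
    module
  have hconv : Ω ((1 - t) • bh + t • β) ≤ (1 - t) * Ω bh + t * Ω β :=
    hΩ.convexOn.2 (mem_univ _) (mem_univ _) (by linarith [ht.2]) ht.1.le (by ring)
  have hmin_t := hmin ((1 - t) • bh + t • β)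
  rw [hres, normN_eq_norm_toScaledEuclidean, normN_eq_norm_toScaledEuclidean, map_add,
    map_smul] at hmin_t
  nlinarith [mul_le_mul_of_nonneg_left hconv hlam]

lemma sqrtLasso_normN_sq_le (hΩ : IsNorm Ω) (hlam : 0 ≤ lam)
    (hmin : ∀ β : Fin p → ℝ,
      normN (Y - X *ᵥ bh) + lam * Ω bh ≤ normN (Y - X *ᵥ β) + lam * Ω β)
    (β : Fin p → ℝ) :
    normN (X *ᵥ (bh - β)) ^ 2 ≤ (Y - X *ᵥ β) ⬝ᵥ X *ᵥ (bh - β) / n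
      - lam * (Ω bh - Ω β) * normN (Y - X *ᵥ bh) := by
  have hsplit : Y - X *ᵥ β = (Y - X *ᵥ bh) + X *ᵥ (bh - β) := by
    rw [mulVec_sub]
    abel
  have hfoc := sqrtLasso_first_order Y X hΩ hlam hmin β
  rw [normN_sq, hsplit, add_dotProduct, add_div]
  linarith

end SqrtLasso

theorem prediction_error_bound_general {n p : ℕ} (Y ε : Fin n → ℝ)
    (X : Matrix (Fin n) (Fin p) ℝ) (β0 : Fin p → ℝ) (hY : Y = X.mulVec β0 + ε)
    (Ω : (Fin p → ℝ) → ℝ) (hΩ : IsNorm Ω) (lam : ℝ) (hlam : 0 < lam)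
    (bh : Fin p → ℝ)
    (hmin : ∀ β : Fin p → ℝ,
      normN (Y - X.mulVec bh) + lam * Ω bh ≤ normN (Y - X.mulVec β) + lam * Ω β)
    (f lam0 : ℝ)
    (hf : f = lam * Ω β0 / normN ε)
    (hlam0 : lam0 = dualNorm Ω (Matrix.vecMul ε X) / (n * normN ε))
    (hε : 0 < normN ε) :
    normN (X.mulVec (bh - β0))
      ≤ normN ε * Real.sqrt (lam0 / lam + 2 * (lam0 / lam) * f
          + (normN (Y - X.mulVec bh) / normN ε) * f) := by
  have hnoise_eq : Y - X *ᵥ β0 = ε := by rw [hY, add_sub_cancel_left]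
  set E := Y - X *ᵥ bh
  set v := X *ᵥ (bh - β0)
  have hbasic : normN E + lam * Ω bh ≤ normN ε + lam * Ω β0 := hnoise_eq ▸ hmin β0
  have hpred : normN v ^ 2 ≤ ε ⬝ᵥ v / n - lam * (Ω bh - Ω β0) * normN E :=
    hnoise_eq ▸ sqrtLasso_normN_sq_le Y X hΩ hlam.le hmin β0
  have hlam0_nonneg : 0 ≤ lam0 := hlam0 ▸ div_nonneg (hΩ.dualNorm_nonneg _) (by positivity)
  have hnoise : ε ⬝ᵥ v / n ≤ lam0 * normN ε * (Ω bh + Ω β0) :=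
    calc ε ⬝ᵥ v / n ≤ lam0 * normN ε * Ω (bh - β0) :=
          hlam0 ▸ dotProduct_mulVec_div_le_dualNorm_mul hΩ hε.ne' X _
      _ ≤ lam0 * normN ε * (Ω bh + Ω β0) := by gcongr; exact hΩ.map_sub_le_add bh β0
  have hsq : normN v ^ 2 ≤ normN ε ^ 2 * (lam0 / lam + 2 * (lam0 / lam) * f
      + (normN E / normN ε) * f) := by
    rw [hf]
    field_simp
    have hc : 0 ≤ lam0 * normN ε := by positivity
    have hE_nonneg : 0 ≤ normN E := Real.sqrt_nonneg _
    nlinarith [mul_le_mul_of_nonneg_left hnoise hlam.le, mul_le_mul_of_nonneg_left hbasic hc,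
      mul_nonneg hc hE_nonneg, mul_nonneg (mul_nonneg (sq_nonneg lam) (hΩ.nonneg bh)) hE_nonneg]
  calc normN v ≤ √(normN ε ^ 2 * (lam0 / lam + 2 * (lam0 / lam) * f
          + (normN E / normN ε) * f)) := (le_abs_self _).trans (Real.abs_le_sqrt hsq)
    _ = _ := by rw [Real.sqrt_mul (sq_nonneg _), Real.sqrt_sq hε.le]

/-- bound on the prediction error
`‖X(β̂ - β⁰)‖_n ≤ ‖ε‖_n √(λ⁰/λ + 2(λ⁰/λ)f + (‖ε̂‖_n/‖ε‖_n) f)`. -/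
theorem prediction_error_bound {n p : ℕ} (Y ε : Fin n → ℝ)
    (X : Matrix (Fin n) (Fin p) ℝ) (β0 : Fin p → ℝ) (hY : Y = X.mulVec β0 + ε)
    (Ω : (Fin p → ℝ) → ℝ) (hΩ : IsNorm Ω) (lam : ℝ) (hlam : 0 < lam)
    (bh : Fin p → ℝ)
    (hmin : ∀ β : Fin p → ℝ,
      normN (Y - X.mulVec bh) + lam * Ω bh ≤ normN (Y - X.mulVec β) + lam * Ω β)
    (f lam0 : ℝ)
    (hf : f = lam * Ω β0 / normN ε)
    (hlam0 : lam0 = dualNorm Ω (Matrix.vecMul ε X) / (n * normN ε))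
    (hε : 0 < normN ε) (hεh : normN (Y - X.mulVec bh) ≠ 0) :
    normN (X.mulVec (bh - β0))
      ≤ normN ε * Real.sqrt (lam0 / lam + 2 * (lam0 / lam) * f
          + (normN (Y - X.mulVec bh) / normN ε) * f) :=
  prediction_error_bound_general Y ε X β0 hY Ω hΩ lam hlam bh hmin f lam0 hf hlam0 hε
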